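/- Let L = 3, R = 3/4, and \ell \ge 0. Then 2\hat V_2 - \hat V_1 > 0 if and only if \ell > \ell^*, where \ell^* = (3/4) \cdot ((\pi - 4)\sqrt{2} + 2)/(\pi(\sqrt{2}-1)); consequently the bifurcation of the constant steady state is supercritical exactly for \ell \in (\ell^*, \ell_c) and subcritical for \ell \in (0, \ell^*), independently of the value of D. -/

import Mathlib

open Real MeasureTheory

/-- The 1D interaction potential: `V x = (|x| - ℓ)^2 - (R - ℓ)^2` for `|x| < R`, `0` otherwise. -/
noncomputable def potV (R ℓ : ℝ) (x : ℝ) : ℝ :=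
  if |x| < R then (|x| - ℓ) ^ 2 - (R - ℓ) ^ 2 else 0

/-- The `k`-th Fourier coefficient of `V` on the periodic domain `[-L, L]`.
It is a real number since `V` is real and even. -/
noncomputable def VhatC (L R ℓ : ℝ) (k : ℤ) : ℂ :=
  (1 / (2 * L)) *
    ∫ x in (-L)..L, (potV R ℓ x : ℂ) *
      Complex.exp (-(Complex.I * (π : ℂ) * (k : ℂ) * (x : ℂ) / (L : ℂ)))

/-!
`V` is even, continuous and vanishes outside `(-R, R)`, so
`V̂_k = (1/L) ∫₀ᴿ ((x - ℓ)² - (R - ℓ)²) cos (π k x / L) dx`,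
which integrates in closed form.
For `L = 3`, `R = 3/4` the arguments `π k R / L` are `π/4` and `π/2`, and the closed forms give
`2 V̂₂ - V̂₁ = 3 (√2 - 1) / π² · (ℓ - ℓ*)`, affine in `ℓ` with positive slope.
-/

section Potential

variable {R ℓ : ℝ}

theorem potV_neg (x : ℝ) : potV R ℓ (-x) = potV R ℓ x := by
  simp only [potV, abs_neg]

theorem potV_of_le_abs {x : ℝ} (hx : R ≤ |x|) : potV R ℓ x = 0 :=
  if_neg (not_lt.mpr hx)

theorem potV_of_mem_Icc {x : ℝ} (hx : x ∈ Set.Icc 0 R) :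
    potV R ℓ x = (x - ℓ) ^ 2 - (R - ℓ) ^ 2 := by
  rcases hx.2.lt_or_eq with hlt | rfl
  · rw [potV, abs_of_nonneg hx.1, if_pos hlt]
  · rw [potV_of_le_abs (abs_of_nonneg hx.1).ge, sub_self]

variable (R ℓ)

theorem continuous_potV : Continuous (potV R ℓ) := by
  refine Continuous.if (fun x hx ↦ ?_) (by fun_prop) continuous_const
  have hx : |x| = R := frontier_lt_subset_eq (by fun_prop) continuous_const hx
  rw [hx, sub_self]

end Potential

theorem re_VhatC (L R ℓ : ℝ) (k : ℤ) :
    (VhatC L R ℓ k).re = 1 / (2 * L) * ∫ x in (-L)..L, potV R ℓ x * cos (π * k * x / L) := by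
  have hint : IntervalIntegrable (fun x : ℝ ↦ (potV R ℓ x : ℂ) *
      Complex.exp (-(Complex.I * π * k * x / L))) volume (-L) L := by
    have := continuous_potV R ℓ
    exact Continuous.intervalIntegrable (by fun_prop) _ _
  have hcoef : (1 / (2 * L : ℂ)) = ((1 / (2 * L) : ℝ) : ℂ) := by push_cast; rfl
  rw [VhatC, hcoef, Complex.re_ofReal_mul, ← RCLike.re_to_complex,
    ← intervalIntegral.intervalIntegral_re hint]
  congr 1
  refine intervalIntegral.integral_congr fun x _ ↦ ?_
  have harg : -(Complex.I * π * k * x / L) = ((-(π * k * x / L) : ℝ) : ℂ) * Complex.I := by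
    push_cast; ring
  simp only [RCLike.re_to_complex]
  rw [harg, Complex.re_ofReal_mul, Complex.exp_ofReal_mul_I_re, cos_neg]

theorem intervalIntegral.integral_neg_self_eq_two_mul_of_even {f : ℝ → ℝ} (hf : Continuous f)
    (heven : ∀ x, f (-x) = f x) (L : ℝ) :
    ∫ x in (-L)..L, f x = 2 * ∫ x in (0 : ℝ)..L, f x := by
  have hneg : ∫ x in (-L)..0, f x = ∫ x in (0 : ℝ)..L, f x := by
    simpa only [heven, neg_zero, neg_neg] using
      (intervalIntegral.integral_comp_neg (a := -L) (b := 0) f)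
  rw [← intervalIntegral.integral_add_adjacent_intervals (hf.intervalIntegrable _ _)
    (hf.intervalIntegrable _ _), hneg, two_mul]

theorem hasDerivAt_sq_sub_mul_cos_antideriv {ω : ℝ} (hω : ω ≠ 0) (a c x : ℝ) :
    HasDerivAt (fun x ↦ ((x - a) ^ 2 - c - 2 / ω ^ 2) * sin (ω * x) / ω
        + 2 * (x - a) * cos (ω * x) / ω ^ 2)
      (((x - a) ^ 2 - c) * cos (ω * x)) x := by
  have hlin : HasDerivAt (fun x ↦ ω * x) ω x := by simpa using (hasDerivAt_id x).const_mul ω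
  have hsin := (hasDerivAt_sin (ω * x)).comp x hlin
  have hcos := (hasDerivAt_cos (ω * x)).comp x hlin
  have hsq : HasDerivAt (fun x ↦ (x - a) ^ 2 - c - 2 / ω ^ 2) (2 * (x - a)) x := by
    simpa using ((((hasDerivAt_id x).sub_const a).pow 2).sub_const c).sub_const (2 / ω ^ 2)
  have hlin' : HasDerivAt (fun x ↦ 2 * (x - a)) 2 x := by
    simpa using ((hasDerivAt_id x).sub_const a).const_mul 2
  refine (((hsq.mul hsin).div_const ω).add ((hlin'.mul hcos).div_const (ω ^ 2))).congr_deriv ?_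
  simp only [Function.comp_apply]
  field_simp
  ring

theorem integral_potV_mul_cos {L R ℓ ω : ℝ} (hR : 0 ≤ R) (hRL : R ≤ L) (hω : ω ≠ 0) :
    ∫ x in (-L)..L, potV R ℓ x * cos (ω * x)
      = 4 * (-sin (ω * R) / ω ^ 3 + (R - ℓ) * cos (ω * R) / ω ^ 2 + ℓ / ω ^ 2) := by
  have hcont : Continuous fun x ↦ potV R ℓ x * cos (ω * x) := by
    have := continuous_potV R ℓ
    fun_prop
  have houter : ∫ x in R..L, potV R ℓ x * cos (ω * x) = 0 := by
    rw [intervalIntegral.integral_congr (g := fun _ ↦ 0) fun x hx ↦ ?_,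
      intervalIntegral.integral_zero]
    rw [Set.uIcc_of_le hRL] at hx
    simp only [potV_of_le_abs (hx.1.trans (le_abs_self x)), zero_mul]
  have hinner : ∫ x in (0 : ℝ)..R, potV R ℓ x * cos (ω * x)
      = ∫ x in (0 : ℝ)..R, ((x - ℓ) ^ 2 - (R - ℓ) ^ 2) * cos (ω * x) :=
    intervalIntegral.integral_congr fun x hx ↦ by
      rw [Set.uIcc_of_le hR] at hx
      rw [potV_of_mem_Icc hx]
  rw [intervalIntegral.integral_neg_self_eq_two_mul_of_even hcont (fun x ↦ by
      rw [potV_neg, mul_neg, cos_neg]) L,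
    ← intervalIntegral.integral_add_adjacent_intervals (hcont.intervalIntegrable 0 R)
      (hcont.intervalIntegrable R L), houter, add_zero, hinner,
    intervalIntegral.integral_eq_sub_of_hasDerivAt
      (fun x _ ↦ hasDerivAt_sq_sub_mul_cos_antideriv hω ℓ ((R - ℓ) ^ 2) x)
      (Continuous.intervalIntegrable (by fun_prop) _ _)]
  simp only [mul_zero, sin_zero, cos_zero]
  field_simp
  ring

theorem re_VhatC_of_ne_zero {L R : ℝ} (ℓ : ℝ) {k : ℤ} (hR : 0 ≤ R) (hRL : R ≤ L)
    (hL : L ≠ 0) (hk : k ≠ 0) :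
    (VhatC L R ℓ k).re = 2 / L * (-sin (π * k / L * R) / (π * k / L) ^ 3
      + (R - ℓ) * cos (π * k / L * R) / (π * k / L) ^ 2 + ℓ / (π * k / L) ^ 2) := by
  have hω : π * k / L ≠ 0 := div_ne_zero (mul_ne_zero pi_ne_zero (Int.cast_ne_zero.mpr hk)) hL
  rw [re_VhatC]
  simp only [mul_div_right_comm (π * k) _ L]
  rw [integral_potV_mul_cos hR hRL hω]
  ring

noncomputable def ellStar : ℝ := 3 / 4 * ((π - 4) * √2 + 2) / (π * (√2 - 1))

theorem two_mul_re_VhatC_two_sub_re_VhatC_one (ℓ : ℝ) :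
    2 * (VhatC 3 (3 / 4) ℓ 2).re - (VhatC 3 (3 / 4) ℓ 1).re
      = 3 * (√2 - 1) / π ^ 2 * (ℓ - ellStar) := by
  rw [re_VhatC_of_ne_zero ℓ (by norm_num) (by norm_num) (by norm_num) (by norm_num),
    re_VhatC_of_ne_zero ℓ (by norm_num) (by norm_num) (by norm_num) (by norm_num)]
  push_cast
  rw [show π * 2 / 3 * (3 / 4) = π / 2 by ring, show π * 1 / 3 * (3 / 4) = π / 4 by ring,
    sin_pi_div_two, cos_pi_div_two, sin_pi_div_four, cos_pi_div_four, ellStar]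
  have hs : √2 - 1 ≠ 0 := sub_ne_zero.mpr (by norm_num)
  field_simp
  ring

theorem bifurcation_type_threshold_1D_general (ℓ : ℝ) :
    (2 * (VhatC 3 (3 / 4) ℓ 2).re - (VhatC 3 (3 / 4) ℓ 1).re > 0 ↔
        ℓ > (3 / 4) * ((π - 4) * Real.sqrt 2 + 2) / (π * (Real.sqrt 2 - 1))) ∧
      ((3 / 4) * ((π - 4) * Real.sqrt 2 + 2) / (π * (Real.sqrt 2 - 1)) < ℓ ∧
          ℓ < (3 / 4) * (4 - π) * (Real.sqrt 2 + 1) / π →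
        2 * (VhatC 3 (3 / 4) ℓ 2).re - (VhatC 3 (3 / 4) ℓ 1).re > 0) ∧
      (0 < ℓ ∧ ℓ < (3 / 4) * ((π - 4) * Real.sqrt 2 + 2) / (π * (Real.sqrt 2 - 1)) →
        2 * (VhatC 3 (3 / 4) ℓ 2).re - (VhatC 3 (3 / 4) ℓ 1).re < 0) := by
  have hc : 0 < 3 * (√2 - 1) / π ^ 2 :=
    div_pos (mul_pos three_pos (sub_pos.mpr one_lt_sqrt_two)) (pow_pos pi_pos 2)
  have hsupercritical :
      2 * (VhatC 3 (3 / 4) ℓ 2).re - (VhatC 3 (3 / 4) ℓ 1).re > 0 ↔ ℓ > ellStar := by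
    rw [two_mul_re_VhatC_two_sub_re_VhatC_one, gt_iff_lt, mul_pos_iff_of_pos_left hc, sub_pos]
  refine ⟨hsupercritical, fun h ↦ hsupercritical.mpr h.1, fun h ↦ ?_⟩
  rw [two_mul_re_VhatC_two_sub_re_VhatC_one]
  exact mul_neg_of_pos_of_neg hc (sub_neg.mpr h.2)

/-- For `L = 3`, `R = 3/4`: `2V̂₂ - V̂₁ > 0` iff `ℓ > ℓ* = (3/4)((π - 4)√2 + 2)/(π(√2 - 1))`.
Consequently (by the bifurcation criterion of Proposition 1), the bifurcation of the constant
steady state is supercritical (`2V̂₂ - V̂₁ > 0`) exactly for `ℓ ∈ (ℓ*, ℓ_c)` and subcritical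
(`2V̂₂ - V̂₁ < 0`) for `ℓ ∈ (0, ℓ*)`, independently of `D`,
where `ℓ_c = (3/4)(4 - π)(√2 + 1)/π`. -/
theorem bifurcation_type_threshold_1D (ℓ : ℝ) (hℓ : 0 ≤ ℓ) :
    (2 * (VhatC 3 (3 / 4) ℓ 2).re - (VhatC 3 (3 / 4) ℓ 1).re > 0 ↔
        ℓ > (3 / 4) * ((π - 4) * Real.sqrt 2 + 2) / (π * (Real.sqrt 2 - 1))) ∧
      ((3 / 4) * ((π - 4) * Real.sqrt 2 + 2) / (π * (Real.sqrt 2 - 1)) < ℓ ∧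
          ℓ < (3 / 4) * (4 - π) * (Real.sqrt 2 + 1) / π →
        2 * (VhatC 3 (3 / 4) ℓ 2).re - (VhatC 3 (3 / 4) ℓ 1).re > 0) ∧
      (0 < ℓ ∧ ℓ < (3 / 4) * ((π - 4) * Real.sqrt 2 + 2) / (π * (Real.sqrt 2 - 1)) →
        2 * (VhatC 3 (3 / 4) ℓ 2).re - (VhatC 3 (3 / 4) ℓ 1).re < 0) :=
  bifurcation_type_threshold_1D_general ℓ
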